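/- Suppose for each player i, F_i and approximations F_{β*_i}, F_{β̂_i} satisfy ‖F_i − F_{β*_i}‖_∞ ≤ η L_z, ‖F_{β*_i} − F_{β̂_i}‖_∞ ≤ L_z ε ‖β̂_i − β*_i‖, and that x_i ↦ F_{β_i}(x_i,x_{−i}) and x_{−i} ↦ F_{β_i}(x_i,x_{−i}) are L̄-Lipschitz for β ∈ {β*, β̂}. Let x̂ be a Nash equilibrium of the game with costs F_{β̂_i}, x** a Nash equilibrium for F_{β*_i}, and x* a Nash equilibrium for F_i, all in a compact convex set X. Then |F_i(x̂) − F_i(x*)| ≤ 2η L_z + 2L_z ε ‖β̂_i − β*_i‖ + 2√2 · L̄ · diam(X). -/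

import Mathlib

/-- Excess-risk bound at Nash equilibria (Corollary 1 of the paper): if the true costs
`F_i` are uniformly `η L_z`-close to `F_{β*_i}`, which are uniformly
`L_z ε ‖β̂_i - β*_i‖`-close to `F_{β̂_i}`, and the approximate costs are `L̄`-Lipschitz
in each player's own and the others' decisions, then for Nash equilibria `x̂` (of
`{F_{β̂_i}}`), `x**` (of `{F_{β*_i}}`) and `x*` (of `{F_i}`) in the compact convex set
`X = Π_i X_i`, `|F_i(x̂) - F_i(x*)| ≤ 2ηL_z + 2L_zε‖β̂_i - β*_i‖ + 2√2 L̄ diam(X)`. -/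
theorem excess_risk_nash_bound
    {n ℓ : ℕ} (dd : Fin n → ℕ)
    (Xs : (i : Fin n) → Set (EuclideanSpace ℝ (Fin (dd i))))
    (hcomp : ∀ i, IsCompact (Xs i)) (hconv : ∀ i, Convex ℝ (Xs i))
    (S : Set (PiLp 2 fun i : Fin n => EuclideanSpace ℝ (Fin (dd i))))
    (hS : S = {x | ∀ i, x i ∈ Xs i})
    (η ε Lz Lbar : ℝ) (hη : 0 < η) (hε : 0 < ε) (hLz : 0 < Lz) (hLbar : 0 ≤ Lbar)
    (βstar βhat : Fin n → EuclideanSpace ℝ (Fin ℓ))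
    (F Fstar Fhat : Fin n →
      (PiLp 2 fun i : Fin n => EuclideanSpace ℝ (Fin (dd i))) → ℝ)
    (hbound1 : ∀ i x, |F i x - Fstar i x| ≤ η * Lz)
    (hbound2 : ∀ i x, |Fstar i x - Fhat i x| ≤ Lz * ε * ‖βhat i - βstar i‖)
    (hlip_own_star : ∀ i x xi xi',
      |Fstar i (WithLp.toLp 2 (Function.update x i xi)) - Fstar i (WithLp.toLp 2 (Function.update x i xi'))| ≤
        Lbar * ‖xi - xi'‖)
    (hlip_own_hat : ∀ i x xi xi',
      |Fhat i (WithLp.toLp 2 (Function.update x i xi)) - Fhat i (WithLp.toLp 2 (Function.update x i xi'))| ≤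
        Lbar * ‖xi - xi'‖)
    (hlip_other_star : ∀ i x x', x i = x' i → |Fstar i x - Fstar i x'| ≤ Lbar * ‖x - x'‖)
    (hlip_other_hat : ∀ i x x', x i = x' i → |Fhat i x - Fhat i x'| ≤ Lbar * ‖x - x'‖)
    (xhat xss xstar : PiLp 2 fun i : Fin n => EuclideanSpace ℝ (Fin (dd i)))
    (hxhatS : xhat ∈ S) (hxssS : xss ∈ S) (hxstarS : xstar ∈ S)
    (hxhat : ∀ i, ∀ xi ∈ Xs i, Fhat i xhat ≤ Fhat i (WithLp.toLp 2 (Function.update xhat.ofLp i xi)))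
    (hxss : ∀ i, ∀ xi ∈ Xs i, Fstar i xss ≤ Fstar i (WithLp.toLp 2 (Function.update xss.ofLp i xi)))
    (hxstar : ∀ i, ∀ xi ∈ Xs i, F i xstar ≤ F i (WithLp.toLp 2 (Function.update xstar.ofLp i xi))) :
    ∀ i, |F i xhat - F i xstar| ≤
      2 * η * Lz + 2 * Lz * ε * ‖βhat i - βstar i‖ +
        2 * Real.sqrt 2 * Lbar * Metric.diam S := by
  intro i
  -- S is bounded
  have hScomp : IsCompact S := by
    rw [hS]
    have h1 : IsCompact (Set.univ.pi Xs) := isCompact_univ_pi hcomp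
    have := ((PiLp.continuousLinearEquiv 2 ℝ
        (fun i : Fin n => EuclideanSpace ℝ (Fin (dd i)))).toHomeomorph).isCompact_preimage.mpr h1
    convert this using 1
    ext x
    simp only [Set.mem_preimage, Set.mem_univ_pi, Set.mem_setOf_eq]
    exact Iff.rfl
  have hSb : Bornology.IsBounded S := hScomp.isBounded
  rw [hS] at hxhatS hxstarS
  set u : PiLp 2 (fun i : Fin n => EuclideanSpace ℝ (Fin (dd i))) :=
    WithLp.toLp 2 (Function.update xhat.ofLp i (xstar i)) with hu_def
  set v : PiLp 2 (fun i : Fin n => EuclideanSpace ℝ (Fin (dd i))) :=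
    WithLp.toLp 2 (Function.update xstar.ofLp i (xhat i)) with hv_def
  have hu : u ∈ S := by
    rw [hS, hu_def]; intro j
    rcases eq_or_ne j i with h | h
    · subst h; simpa using hxstarS j
    · simpa [Function.update_of_ne h] using hxhatS j
  have hv : v ∈ S := by
    rw [hS, hv_def]; intro j
    rcases eq_or_ne j i with h | h
    · subst h; simpa using hxhatS j
    · simpa [Function.update_of_ne h] using hxstarS j
  have hxhatS' : xhat ∈ S := by rw [hS]; exact hxhatS
  have hxstarS' : xstar ∈ S := by rw [hS]; exact hxstarS
  have hd1 : ‖u - xstar‖ ≤ Metric.diam S := by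
    rw [← dist_eq_norm]; exact Metric.dist_le_diam_of_mem hSb hu hxstarS'
  have hd2 : ‖v - xhat‖ ≤ Metric.diam S := by
    rw [← dist_eq_norm]; exact Metric.dist_le_diam_of_mem hSb hv hxhatS'
  have hdiam : (0:ℝ) ≤ Metric.diam S := Metric.diam_nonneg
  have hsqrt : (1:ℝ) ≤ Real.sqrt 2 := by
    rw [show (1:ℝ) = Real.sqrt 1 from (Real.sqrt_one).symm]
    exact Real.sqrt_le_sqrt (by norm_num)
  have hβ : (0:ℝ) ≤ Lz * ε * ‖βhat i - βstar i‖ := by positivity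
  -- abbreviations
  have h1h := abs_le.mp (hbound1 i xhat)
  have h1s := abs_le.mp (hbound1 i xstar)
  have h1v := abs_le.mp (hbound1 i v)
  have h2h := abs_le.mp (hbound2 i xhat)
  have h2s := abs_le.mp (hbound2 i xstar)
  -- forward: F i xhat - F i xstar
  have hhat_step : Fhat i xhat ≤ Fhat i u :=
    hxhat i (xstar i) (hxstarS i)
  have hhat_lip : |Fhat i u - Fhat i xstar| ≤
      Lbar * ‖u - xstar‖ :=
    hlip_other_hat i _ _ (by simp [hu_def])
  have hhat_lip' := (abs_le.mp hhat_lip).2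
  have hstar_step : F i xstar ≤ F i v :=
    hxstar i (xhat i) (hxhatS i)
  have hstar_lip : |Fstar i v - Fstar i xhat| ≤
      Lbar * ‖v - xhat‖ :=
    hlip_other_star i _ _ (by simp [hv_def])
  have hstar_lip' := (abs_le.mp hstar_lip).2
  have hmul1 : Lbar * ‖u - xstar‖ ≤ Lbar * Metric.diam S :=
    mul_le_mul_of_nonneg_left hd1 hLbar
  have hmul2 : Lbar * ‖v - xhat‖ ≤ Lbar * Metric.diam S :=
    mul_le_mul_of_nonneg_left hd2 hLbar
  have hcoef : Lbar * Metric.diam S ≤ 2 * Real.sqrt 2 * Lbar * Metric.diam S := by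
    nlinarith [mul_nonneg hLbar hdiam]
  rw [abs_sub_le_iff]
  constructor
  · linarith [h1h.2, h2h.2, h2s.1, h1s.1]
  · linarith [h1v.2, h1h.1]
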